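/- Let f be an agent with fully substitutable choice function satisfying IRC, Y an acceptable set, and x_1,…,x_k ∈ X_f^B, z_1,…,z_k ∈ X_f^S such that {x_i, z_i} is a (Y,f)-rational pair for each i but the full set {x_1,…,x_k, z_1,…,z_k} is not (Y,f)-rational. Then there exist i ≠ j such that {x_i, z_j} is a (Y,f)-rational pair. -/
import Mathlib


variable {F X : Type*} [DecidableEq X] [DecidableEq F]

/-- Contracts in `Y` involving agent `f` (as buyer or seller). -/
def Xf (b s : X → F) (f : F) (Y : Finset X) : Finset X :=
  Y.filter (fun x => b x = f ∨ s x = f)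

/-- Upstream contracts of `f` in `Y`. -/
def Yb (b : X → F) (f : F) (Y : Finset X) : Finset X := Y.filter (fun x => b x = f)

/-- Downstream contracts of `f` in `Z`. -/
def Zs (s : X → F) (f : F) (Z : Finset X) : Finset X := Z.filter (fun x => s x = f)

/-- Chosen upstream contracts of `f` from upstream offers `Y` and downstream offers `Z`. -/
def CB (b s : X → F) (C : F → Finset X → Finset X) (f : F) (Y Z : Finset X) : Finset X :=
  (C f (Yb b f Y ∪ Zs s f Z)).filter (fun x => b x = f)

/-- Chosen downstream contracts of `f` from downstream offers `Z` and upstream offers `Y`. -/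
def CS (b s : X → F) (C : F → Finset X → Finset X) (f : F) (Z Y : Finset X) : Finset X :=
  (C f (Zs s f Z ∪ Yb b f Y)).filter (fun x => s x = f)

/-- Rejected upstream contracts. -/
def RB (b s : X → F) (C : F → Finset X → Finset X) (f : F) (Y Z : Finset X) : Finset X :=
  Yb b f Y \ CB b s C f Y Z

/-- Rejected downstream contracts. -/
def RS (b s : X → F) (C : F → Finset X → Finset X) (f : F) (Z Y : Finset X) : Finset X :=
  Zs s f Z \ CS b s C f Z Y

/-- Full substitutability: same-side substitutability and cross-side complementarity. -/
def FullySubstitutable (b s : X → F) (C : F → Finset X → Finset X) : Prop :=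
  (∀ (f : F) (Y' Y Z : Finset X), Y' ⊆ Y → RB b s C f Y' Z ⊆ RB b s C f Y Z) ∧
  (∀ (f : F) (Z' Z Y : Finset X), Z' ⊆ Z → RS b s C f Z' Y ⊆ RS b s C f Z Y) ∧
  (∀ (f : F) (Y Z' Z : Finset X), Z' ⊆ Z → RB b s C f Y Z ⊆ RB b s C f Y Z') ∧
  (∀ (f : F) (Z Y' Y : Finset X), Y' ⊆ Y → RS b s C f Z Y ⊆ RS b s C f Z Y')

/-- Irrelevance of rejected contracts. -/
def IRC (C : F → Finset X → Finset X) : Prop :=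
  ∀ (f : F) (Y Z : Finset X), C f Y ⊆ Z → Z ⊆ Y → C f Z = C f Y

/-- `A` is `(W,f)`-rational: `A_f ⊆ C^f(W_f ∪ A_f)`. -/
def Rational (b s : X → F) (C : F → Finset X → Finset X) (W A : Finset X) (f : F) : Prop :=
  Xf b s f A ⊆ C f (Xf b s f W ∪ Xf b s f A)

/-- `A` is acceptable (individually rational for all agents). -/
def Acceptable (b s : X → F) (C : F → Finset X → Finset X) (A : Finset X) : Prop :=
  ∀ f : F, C f (Xf b s f A) = Xf b s f A

/-- `{y,z}` is a `(W,f)`-rational pair: jointly but not individually `(W,f)`-rational. -/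
def RationalPair (b s : X → F) (C : F → Finset X → Finset X) (W : Finset X) (f : F)
    (y z : X) : Prop :=
  ¬ Rational b s C W {y} f ∧ ¬ Rational b s C W {z} f ∧ Rational b s C W {y, z} f

/-- A locally blocking trail to outcome `A`. -/
def LocallyBlockingTrail (b s : X → F) (C : F → Finset X → Finset X) (A : Finset X) : Prop :=
  ∃ (M : ℕ) (x : ℕ → X), 0 < M ∧
    (∀ i j, i < M → j < M → x i = x j → i = j) ∧
    (∀ i, i + 1 < M → b (x i) = s (x (i + 1))) ∧
    (∀ i, i < M → x i ∉ A) ∧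
    Rational b s C A {x 0} (s (x 0)) ∧
    (∀ i, 0 < i → i < M → Rational b s C A {x (i - 1), x i} (b (x (i - 1)))) ∧
    Rational b s C A {x (M - 1)} (b (x (M - 1)))

/-- A blocking trail to outcome `A` (with initial- or final-segment rationality
at intermediate agents). -/
def BlockingTrail (b s : X → F) (C : F → Finset X → Finset X) (A : Finset X) : Prop :=
  ∃ (M : ℕ) (x : ℕ → X), 0 < M ∧
    (∀ i j, i < M → j < M → x i = x j → i = j) ∧
    (∀ i, i + 1 < M → b (x i) = s (x (i + 1))) ∧
    (∀ i, i < M → x i ∉ A) ∧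
    Rational b s C A {x 0} (s (x 0)) ∧
    ((∀ i, 0 < i → i < M →
        Rational b s C A ((Finset.range (i + 1)).image x) (b (x (i - 1)))) ∨
     (∀ i, 0 < i → i < M →
        Rational b s C A ((Finset.Ico (i - 1) M).image x) (b (x (i - 1))))) ∧
    Rational b s C A {x (M - 1)} (b (x (M - 1)))

/-- Fully trail-stable outcome. -/
def FullyTrailStable (b s : X → F) (C : F → Finset X → Finset X) (A : Finset X) : Prop :=
  Acceptable b s C A ∧ ¬ LocallyBlockingTrail b s C A

/-- Trail-stable outcome. -/
def TrailStable (b s : X → F) (C : F → Finset X → Finset X) (A : Finset X) : Prop :=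
  Acceptable b s C A ∧ ¬ BlockingTrail b s C A

/-- Set-stable outcome. -/
def SetStable (b s : X → F) (C : F → Finset X → Finset X) (A : Finset X) : Prop :=
  Acceptable b s C A ∧
  ¬ ∃ Z : Finset X, Z.Nonempty ∧ Disjoint Z A ∧ ∀ f : F, Rational b s C A Z f

/-- Separable choice functions. -/
def Separable (b s : X → F) (C : F → Finset X → Finset X) : Prop :=
  ∀ (f : F) (A W : Finset X) (y z : X), b y = f → s z = f → y ∉ A → z ∉ A →
    Rational b s C W A f → RationalPair b s C W f y z →
    Rational b s C W (A ∪ {y, z}) f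

/-- Simple choice functions (with an intensity map). -/
def Simple (b s : X → F) (C : F → Finset X → Finset X) : Prop :=
  ∀ f : F, ∃ w : X → ℝ, ∀ (W A : Finset X), Acceptable b s C A →
    Rational b s C W A f →
    ∀ y ∈ A, b y = f → ∃ z ∈ A, s z = f ∧ w y > w z

/-- Aggregate upstream rejection function. -/
def RBagg [Fintype F] (b s : X → F) (C : F → Finset X → Finset X) (Y Z : Finset X) : Finset X :=
  (Finset.univ : Finset F).biUnion (fun f => RB b s C f Y Z)

/-- Aggregate downstream rejection function. -/
def RSagg [Fintype F] (b s : X → F) (C : F → Finset X → Finset X) (Z Y : Finset X) : Finset X :=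
  (Finset.univ : Finset F).biUnion (fun f => RS b s C f Z Y)


section ShortcutProofHelpers

open Finset

private lemma Xf_eq_self' {b s : X → F} {f : F} {A : Finset X}
    (h : ∀ a ∈ A, b a = f ∨ s a = f) : Xf b s f A = A :=
  Finset.filter_true_of_mem h

private lemma offer_eq' {b s : X → F} {f : F} {W A B : Finset X}
    (hW : ∀ v ∈ W, b v = f ∨ s v = f)
    (hA : ∀ a ∈ A, b a = f) (hB : ∀ a ∈ B, s a = f) :
    Yb b f (W ∪ A) ∪ Zs s f (W ∪ B) = W ∪ A ∪ B := by
  ext c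
  simp only [Yb, Zs, mem_union, mem_filter]
  constructor
  · rintro (⟨h1, _⟩ | ⟨h1, _⟩) <;> tauto
  · rintro ((h | h) | h)
    · rcases hW c h with h' | h'
      · exact Or.inl ⟨Or.inl h, h'⟩
      · exact Or.inr ⟨Or.inl h, h'⟩
    · exact Or.inl ⟨Or.inr h, hA c h⟩
    · exact Or.inr ⟨Or.inr h, hB c h⟩

private lemma mlB_gen {b s : X → F} {C : F → Finset X → Finset X}
    (hfs : FullySubstitutable b s C) {f : F} {W : Finset X}
    (hW : ∀ v ∈ W, b v = f ∨ s v = f)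
    {A A' B B' : Finset X}
    (hA : ∀ a ∈ A, b a = f) (hA' : ∀ a ∈ A', b a = f)
    (hB : ∀ a ∈ B, s a = f) (hB' : ∀ a ∈ B', s a = f)
    (hAA : A ⊆ A') (hBB : B' ⊆ B)
    {c : X} (hc : b c = f) (hcW : c ∈ W ∪ A)
    (hrej : c ∉ C f (W ∪ A ∪ B)) : c ∉ C f (W ∪ A' ∪ B') := by
  have hoff : Yb b f (W ∪ A) ∪ Zs s f (W ∪ B) = W ∪ A ∪ B := offer_eq' hW hA hB
  have hoff' : Yb b f (W ∪ A') ∪ Zs s f (W ∪ B') = W ∪ A' ∪ B' := offer_eq' hW hA' hB'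
  have h1 : c ∈ RB b s C f (W ∪ A) (W ∪ B) := by
    unfold RB CB
    rw [hoff]
    simp only [Yb, mem_sdiff, mem_filter]
    exact ⟨⟨hcW, hc⟩, fun h => hrej h.1⟩
  have h2 := hfs.1 f (W ∪ A) (W ∪ A') (W ∪ B)
    (Finset.union_subset_union (Finset.Subset.refl _) hAA) h1
  have h3 := hfs.2.2.1 f (W ∪ A') (W ∪ B') (W ∪ B)
    (Finset.union_subset_union (Finset.Subset.refl _) hBB) h2
  unfold RB CB at h3
  rw [hoff'] at h3
  simp only [Yb, mem_sdiff, mem_filter] at h3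
  exact fun h => h3.2 ⟨h, hc⟩

private lemma mlS_gen {b s : X → F} {C : F → Finset X → Finset X}
    (hfs : FullySubstitutable b s C) {f : F} {W : Finset X}
    (hW : ∀ v ∈ W, b v = f ∨ s v = f)
    {A A' B B' : Finset X}
    (hA : ∀ a ∈ A, b a = f) (hA' : ∀ a ∈ A', b a = f)
    (hB : ∀ a ∈ B, s a = f) (hB' : ∀ a ∈ B', s a = f)
    (hAA : A' ⊆ A) (hBB : B ⊆ B')
    {c : X} (hc : s c = f) (hcW : c ∈ W ∪ B)
    (hrej : c ∉ C f (W ∪ A ∪ B)) : c ∉ C f (W ∪ A' ∪ B') := by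
  have hoff : Zs s f (W ∪ B) ∪ Yb b f (W ∪ A) = W ∪ A ∪ B := by
    rw [Finset.union_comm]; exact offer_eq' hW hA hB
  have hoff' : Zs s f (W ∪ B') ∪ Yb b f (W ∪ A') = W ∪ A' ∪ B' := by
    rw [Finset.union_comm]; exact offer_eq' hW hA' hB'
  have h1 : c ∈ RS b s C f (W ∪ B) (W ∪ A) := by
    unfold RS CS
    rw [hoff]
    simp only [Zs, mem_sdiff, mem_filter]
    exact ⟨⟨hcW, hc⟩, fun h => hrej h.1⟩
  have h2 := hfs.2.1 f (W ∪ B) (W ∪ B') (W ∪ A)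
    (Finset.union_subset_union (Finset.Subset.refl _) hBB) h1
  have h3 := hfs.2.2.2 f (W ∪ B') (W ∪ A') (W ∪ A)
    (Finset.union_subset_union (Finset.Subset.refl _) hAA) h2
  unfold RS CS at h3
  rw [hoff'] at h3
  simp only [Zs, mem_sdiff, mem_filter] at h3
  exact fun h => h3.2 ⟨h, hc⟩

/-- Abstract core of the shortcut argument (done once, applied to both sides by symmetry). -/
private lemma shortcut_aux {X : Type*} [DecidableEq X]
    (C1 : Finset X → Finset X) (P Q : X → Prop) (w : Finset X)
    (hCsub : ∀ V, C1 V ⊆ V)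
    (hirc : ∀ (V : Finset X) (c : X), c ∈ V → c ∉ C1 V → C1 (V.erase c) = C1 V)
    (hbase : C1 w = w)
    (hwPQ : ∀ v ∈ w, P v ∨ Q v)
    (mlB : ∀ A A' B B' : Finset X, (∀ a ∈ A, P a) → (∀ a ∈ A', P a) →
      (∀ a ∈ B, Q a) → (∀ a ∈ B', Q a) → A ⊆ A' → B' ⊆ B →
      ∀ c, P c → c ∈ w ∪ A → c ∉ C1 (w ∪ A ∪ B) → c ∉ C1 (w ∪ A' ∪ B'))
    (mlS : ∀ A A' B B' : Finset X, (∀ a ∈ A, P a) → (∀ a ∈ A', P a) →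
      (∀ a ∈ B, Q a) → (∀ a ∈ B', Q a) → A' ⊆ A → B ⊆ B' →
      ∀ c, Q c → c ∈ w ∪ B → c ∉ C1 (w ∪ A ∪ B) → c ∉ C1 (w ∪ A' ∪ B'))
    (k : ℕ) (x z : ℕ → X)
    (hPx : ∀ i, i < k → P (x i)) (hQz : ∀ i, i < k → Q (z i))
    (hxr : ∀ i, i < k → x i ∉ C1 (w ∪ {x i}))
    (hzr : ∀ i, i < k → z i ∉ C1 (w ∪ {z i}))
    (hpairF : ∀ i, i < k → C1 (w ∪ {x i} ∪ {z i}) = w ∪ {x i} ∪ {z i})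
    (hcross : ∀ i j, i < k → j < k → i ≠ j → C1 (w ∪ {x i} ∪ {z j}) = w)
    (i : ℕ) (hik : i < k)
    (hrej : x i ∉ C1 (w ∪ (Finset.range k).image x ∪ (Finset.range k).image z)) :
    False := by
  classical
  have hxw : ∀ m, m < k → x m ∉ w := by
    intro m hm hmem
    apply hxr m hm
    have h : w ∪ {x m} = w := Finset.union_eq_left.mpr (by simpa using hmem)
    rw [h, hbase]; exact hmem
  have hzw : ∀ m, m < k → z m ∉ w := by
    intro m hm hmem
    apply hzr m hm
    have h : w ∪ {z m} = w := Finset.union_eq_left.mpr (by simpa using hmem)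
    rw [h, hbase]; exact hmem
  have hZsing : ∀ m, m < k → C1 (w ∪ {z m}) = w := by
    intro m hm
    have h1 := hirc (w ∪ {z m}) (z m) (by simp) (hzr m hm)
    have h2 : (w ∪ {z m}).erase (z m) = w := by
      rw [Finset.union_comm, ← Finset.insert_eq, Finset.erase_insert (hzw m hm)]
    rw [h2, hbase] at h1
    exact h1.symm
  -- any set of x's added alone is fully rejected
  have rejAllX : ∀ (n : ℕ) (A : Finset X), A.card = n →
      (∀ a ∈ A, ∃ m, m < k ∧ x m = a) → C1 (w ∪ A) = w := by
    intro n
    induction n with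
    | zero =>
      intro A hA _
      rw [Finset.card_eq_zero.mp hA, Finset.union_empty, hbase]
    | succ n ih =>
      intro A hA hAx
      obtain ⟨a, ha⟩ := Finset.card_pos.mp (by omega : 0 < A.card)
      obtain ⟨m, hm, hma⟩ := hAx a ha
      subst hma
      have hAP : ∀ b ∈ A, P b := by
        intro b hb; obtain ⟨m', hm', h'⟩ := hAx b hb; subst h'; exact hPx m' hm'
      have harej : x m ∉ C1 (w ∪ A ∪ (∅ : Finset X)) := by
        apply mlB {x m} A ∅ ∅ (by simp [hPx m hm]) hAP (by simp) (by simp)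
          (Finset.singleton_subset_iff.mpr ha) (Finset.Subset.refl _)
          (x m) (hPx m hm) (by simp) (by simpa using hxr m hm)
      rw [Finset.union_empty] at harej
      have h1 := hirc (w ∪ A) (x m) (by simp [ha]) harej
      have h2 : (w ∪ A).erase (x m) = w ∪ A.erase (x m) := by
        rw [Finset.erase_union_distrib, Finset.erase_eq_of_notMem (hxw m hm)]
      rw [h2] at h1
      rw [← h1]
      exact ih (A.erase (x m)) (by rw [Finset.card_erase_of_mem ha]; omega)
        (fun b hb => hAx b (Finset.mem_of_mem_erase hb))
  have hXP : ∀ a ∈ (Finset.range k).image x, P a := by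
    intro a ha
    obtain ⟨m, hm, h⟩ := Finset.mem_image.mp ha
    subst h; exact hPx m (Finset.mem_range.mp hm)
  have hZQ : ∀ a ∈ (Finset.range k).image z, Q a := by
    intro a ha
    obtain ⟨m, hm, h⟩ := Finset.mem_image.mp ha
    subst h; exact hQz m (Finset.mem_range.mp hm)
  have hxizi : x i ≠ z i := by
    intro h
    have hfull := hpairF i hik
    have heq : w ∪ {x i} ∪ {z i} = w ∪ {x i} := by
      rw [← h, Finset.union_assoc, Finset.union_self]
    rw [heq] at hfull
    exact hxr i hik (by rw [hfull]; simp)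
  -- step 1: push the rejection down to downstream offers {z i}
  have hrej1 : x i ∉ C1 (w ∪ (Finset.range k).image x ∪ {z i}) := by
    apply mlB _ _ _ _ hXP hXP hZQ (by simp [hQz i hik]) (Finset.Subset.refl _)
      (Finset.singleton_subset_iff.mpr
        (Finset.mem_image.mpr ⟨i, Finset.mem_range.mpr hik, rfl⟩))
      (x i) (hPx i hik)
      (by simp [Finset.mem_image.mpr ⟨i, Finset.mem_range.mpr hik, rfl⟩]) hrej
  -- minimal upstream set still rejecting x i
  set Fam := ((Finset.range k).image x).powerset.filter
      (fun A => x i ∈ A ∧ x i ∉ C1 (w ∪ A ∪ {z i})) with hFam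
  have hFamne : (Finset.range k).image x ∈ Fam := by
    rw [hFam]
    simp only [Finset.mem_filter, Finset.mem_powerset]
    exact ⟨Finset.Subset.refl _,
      Finset.mem_image.mpr ⟨i, Finset.mem_range.mpr hik, rfl⟩, hrej1⟩
  obtain ⟨A, hAFam, hAmin⟩ := Finset.exists_min_image Fam Finset.card ⟨_, hFamne⟩
  rw [hFam] at hAFam
  simp only [Finset.mem_filter, Finset.mem_powerset] at hAFam
  obtain ⟨hAsub, hxiA, hArej⟩ := hAFam
  have hAidx : ∀ a ∈ A, ∃ m, m < k ∧ x m = a := by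
    intro a ha
    obtain ⟨m, hm, h⟩ := Finset.mem_image.mp (hAsub ha)
    exact ⟨m, Finset.mem_range.mp hm, h⟩
  have hAP : ∀ a ∈ A, P a := fun a ha => hXP a (hAsub ha)
  have hAw : ∀ a ∈ A, a ∉ w := by
    intro a ha
    obtain ⟨m, hm, h⟩ := hAidx a ha
    exact h ▸ hxw m hm
  have hziA : z i ∉ A := by
    intro hmem
    have heq : w ∪ A.erase (z i) ∪ {z i} = w ∪ A ∪ {z i} := by
      ext c
      simp only [Finset.mem_union, Finset.mem_erase, Finset.mem_singleton]
      by_cases hc : c = z i <;> simp [hc] <;> tauto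
    have hmemFam : A.erase (z i) ∈ Fam := by
      rw [hFam]
      simp only [Finset.mem_filter, Finset.mem_powerset]
      refine ⟨Finset.Subset.trans (Finset.erase_subset _ _) hAsub,
        Finset.mem_erase.mpr ⟨hxizi, hxiA⟩, ?_⟩
      rw [heq]; exact hArej
    have := hAmin _ hmemFam
    rw [Finset.card_erase_of_mem hmem] at this
    have : 0 < A.card := Finset.card_pos.mpr ⟨_, hmem⟩
    omega
  -- everything except x i is chosen at (A, {z i})
  have hfull : ∀ v ∈ w ∪ A ∪ {z i}, v ≠ x i → v ∈ C1 (w ∪ A ∪ {z i}) := by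
    intro v hv hne
    by_contra hvrej
    rcases Finset.mem_union.mp hv with hv' | hv'
    · rcases Finset.mem_union.mp hv' with hw' | hA'
      · rcases hwPQ v hw' with hP | hQ
        · have h := mlB A A {z i} ∅ hAP hAP (by simp [hQz i hik]) (by simp)
            (Finset.Subset.refl _) (Finset.empty_subset _) v hP (by simp [hw']) hvrej
          rw [Finset.union_empty, rejAllX A.card A rfl hAidx] at h
          exact h hw'
        · have h := mlS A ∅ {z i} {z i} hAP (by simp) (by simp [hQz i hik])
            (by simp [hQz i hik]) (Finset.empty_subset _) (Finset.Subset.refl _)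
            v hQ (by simp [hw']) hvrej
          rw [Finset.union_empty, hZsing i hik] at h
          exact h hw'
      · have hvz : v ≠ z i := fun h => hziA (h ▸ hA')
        have hvw : v ∉ w := hAw v hA'
        have h1 := hirc (w ∪ A ∪ {z i}) v hv hvrej
        have h2 : (w ∪ A ∪ {z i}).erase v = w ∪ A.erase v ∪ {z i} := by
          rw [Finset.erase_union_distrib, Finset.erase_union_distrib,
            Finset.erase_eq_of_notMem hvw,
            Finset.erase_eq_of_notMem (fun h => hvz (Finset.mem_singleton.mp h))]
        rw [h2] at h1
        have hmemFam : A.erase v ∈ Fam := by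
          rw [hFam]
          simp only [Finset.mem_filter, Finset.mem_powerset]
          refine ⟨Finset.Subset.trans (Finset.erase_subset _ _) hAsub,
            Finset.mem_erase.mpr ⟨hne.symm, hxiA⟩, ?_⟩
          rw [h1]; exact hArej
        have hcard := hAmin _ hmemFam
        rw [Finset.card_erase_of_mem hA'] at hcard
        have : 0 < A.card := Finset.card_pos.mpr ⟨_, hA'⟩
        omega
    · have hv'' := Finset.mem_singleton.mp hv'
      rw [hv''] at hvrej
      have h := mlS A {x i} {z i} {z i} hAP (by simp [hPx i hik])
        (by simp [hQz i hik]) (by simp [hQz i hik])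
        (Finset.singleton_subset_iff.mpr hxiA) (Finset.Subset.refl _)
        (z i) (hQz i hik) (by simp) hvrej
      rw [hpairF i hik] at h
      exact h (by simp)
  -- hence the choice from (A, {z i}) is everything but x i
  have hCV : C1 (w ∪ A ∪ {z i}) = (w ∪ A ∪ {z i}).erase (x i) := by
    apply Finset.Subset.antisymm
    · intro c hc
      exact Finset.mem_erase.mpr ⟨fun h => hArej (h ▸ hc), hCsub _ hc⟩
    · intro c hc
      obtain ⟨hne, hcV⟩ := Finset.mem_erase.mp hc
      exact hfull c hcV hne
  have hVi : (w ∪ A ∪ {z i}).erase (x i) = w ∪ A.erase (x i) ∪ {z i} := by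
    rw [Finset.erase_union_distrib, Finset.erase_union_distrib,
      Finset.erase_eq_of_notMem (hxw i hik),
      Finset.erase_eq_of_notMem (fun h => hxizi (Finset.mem_singleton.mp h))]
  have hCV2 : C1 (w ∪ A.erase (x i) ∪ {z i}) = w ∪ A.erase (x i) ∪ {z i} := by
    have h1 := hirc (w ∪ A ∪ {z i}) (x i) (by simp [hxiA]) hArej
    rw [hVi] at h1
    rw [h1, hCV, hVi]
  -- A must contain a second contract x l, l ≠ i
  have hAne : ∃ a ∈ A, a ≠ x i := by
    by_contra h
    push_neg at h
    have hA1 : A = {x i} := Finset.eq_singleton_iff_unique_mem.mpr ⟨hxiA, h⟩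
    rw [hA1, hpairF i hik] at hArej
    exact hArej (by simp)
  obtain ⟨a, haA, hane⟩ := hAne
  obtain ⟨l, hlk, hla⟩ := hAidx a haA
  subst hla
  have hli : l ≠ i := fun h => hane (by rw [h])
  -- the cross pair (x l, z i) gives the contradiction
  have hc1 : x l ∉ C1 (w ∪ {x l} ∪ {z i}) := by
    rw [hcross l i hlk hik hli]
    exact hxw l hlk
  have hfin := mlB {x l} (A.erase (x i)) {z i} {z i} (by simp [hPx l hlk])
    (fun c hc => hAP c (Finset.mem_of_mem_erase hc))
    (by simp [hQz i hik]) (by simp [hQz i hik])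
    (Finset.singleton_subset_iff.mpr (Finset.mem_erase.mpr ⟨hane, haA⟩))
    (Finset.Subset.refl _) (x l) (hPx l hlk) (by simp) hc1
  rw [hCV2] at hfin
  exact hfin (Finset.mem_union.mpr (Or.inl (Finset.mem_union.mpr
    (Or.inr (Finset.mem_erase.mpr ⟨hane, haA⟩)))))

end ShortcutProofHelpers

/-- if each `{x_i, z_i}` is a `(Y,f)`-rational pair but the
whole collection is not `(Y,f)`-rational, then some cross pair `{x_i, z_j}`
with `i ≠ j` is a `(Y,f)`-rational pair. -/
theorem shortcut_lemma (b s : X → F)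
    (C : F → Finset X → Finset X)
    (hC : ∀ (f : F) (A : Finset X), C f A ⊆ A)
    (hfs : FullySubstitutable b s C) (hirc : IRC C)
    (f : F) (Y : Finset X) (hY : Acceptable b s C Y)
    (k : ℕ) (x z : ℕ → X)
    (hb : ∀ i < k, b (x i) = f) (hs : ∀ i < k, s (z i) = f)
    (hpair : ∀ i < k, RationalPair b s C Y f (x i) (z i))
    (hnot : ¬ Rational b s C Y
      (((Finset.range k).image x) ∪ ((Finset.range k).image z)) f) :
    ∃ i < k, ∃ j < k, i ≠ j ∧ RationalPair b s C Y f (x i) (z j) := by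
  classical
  by_contra hgoal
  push_neg at hgoal
  set W := Xf b s f Y with hWdef
  have hWmem : ∀ v ∈ W, b v = f ∨ s v = f := by
    intro v hv
    rw [hWdef] at hv
    exact (Finset.mem_filter.mp hv).2
  have hbase : C f W = W := hY f
  have hircR : ∀ (V : Finset X) (c : X), c ∈ V → c ∉ C f V → C f (V.erase c) = C f V := by
    intro V c hcV hrej
    exact hirc f V (V.erase c)
      (fun a ha => Finset.mem_erase.mpr ⟨fun h => hrej (h ▸ ha), hC f V ha⟩)
      (Finset.erase_subset _ _)
  have hXfx : ∀ i, i < k → Xf b s f {x i} = {x i} := by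
    intro i hi
    apply Xf_eq_self'
    intro a ha
    rw [Finset.mem_singleton] at ha; subst ha
    exact Or.inl (hb i hi)
  have hXfz : ∀ i, i < k → Xf b s f {z i} = {z i} := by
    intro i hi
    apply Xf_eq_self'
    intro a ha
    rw [Finset.mem_singleton] at ha; subst ha
    exact Or.inr (hs i hi)
  have hXfp : ∀ i j, i < k → j < k → Xf b s f {x i, z j} = {x i, z j} := by
    intro i j hi hj
    apply Xf_eq_self'
    intro a ha
    rcases Finset.mem_insert.mp ha with h | h
    · subst h; exact Or.inl (hb i hi)
    · rw [Finset.mem_singleton] at h; subst h; exact Or.inr (hs j hj)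
  have hpairsplit : ∀ (u v : X), (W ∪ {u, v} : Finset X) = W ∪ {u} ∪ {v} := by
    intro u v
    rw [Finset.insert_eq, ← Finset.union_assoc]
  have hxr : ∀ i, i < k → x i ∉ C f (W ∪ {x i}) := by
    intro i hi hmem
    exact (hpair i hi).1 (by
      unfold Rational
      rw [hXfx i hi, ← hWdef]
      exact Finset.singleton_subset_iff.mpr hmem)
  have hzr : ∀ i, i < k → z i ∉ C f (W ∪ {z i}) := by
    intro i hi hmem
    exact (hpair i hi).2.1 (by
      unfold Rational
      rw [hXfz i hi, ← hWdef]
      exact Finset.singleton_subset_iff.mpr hmem)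
  have hxnw : ∀ i, i < k → x i ∉ W := by
    intro i hi hmem
    exact hxr i hi (by
      rw [Finset.union_eq_left.mpr (Finset.singleton_subset_iff.mpr hmem), hbase]
      exact hmem)
  have hznw : ∀ i, i < k → z i ∉ W := by
    intro i hi hmem
    exact hzr i hi (by
      rw [Finset.union_eq_left.mpr (Finset.singleton_subset_iff.mpr hmem), hbase]
      exact hmem)
  have hXsing : ∀ i, i < k → C f (W ∪ {x i}) = W := by
    intro i hi
    have h1 := hircR (W ∪ {x i}) (x i) (by simp) (hxr i hi)
    have h2 : (W ∪ {x i}).erase (x i) = W := by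
      rw [Finset.union_comm, ← Finset.insert_eq, Finset.erase_insert (hxnw i hi)]
    rw [h2, hbase] at h1
    exact h1.symm
  have hZsing : ∀ i, i < k → C f (W ∪ {z i}) = W := by
    intro i hi
    have h1 := hircR (W ∪ {z i}) (z i) (by simp) (hzr i hi)
    have h2 : (W ∪ {z i}).erase (z i) = W := by
      rw [Finset.union_comm, ← Finset.insert_eq, Finset.erase_insert (hznw i hi)]
    rw [h2, hbase] at h1
    exact h1.symm
  have hpairF : ∀ i, i < k → C f (W ∪ {x i} ∪ {z i}) = W ∪ {x i} ∪ {z i} := by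
    intro i hi
    have hjoint : {x i, z i} ⊆ C f (W ∪ {x i} ∪ {z i}) := by
      have h := (hpair i hi).2.2
      unfold Rational at h
      rw [hXfp i i hi hi, ← hWdef, hpairsplit] at h
      exact h
    apply Finset.Subset.antisymm (hC f _)
    intro v hv
    rcases Finset.mem_union.mp hv with hv' | hv'
    · rcases Finset.mem_union.mp hv' with hw' | hx'
      · rcases hWmem v hw' with hP | hQ
        · by_contra hvrej
          have h := mlB_gen hfs hWmem (A := {x i}) (A' := {x i}) (B := {z i}) (B' := ∅)
            (by simp [hb i hi]) (by simp [hb i hi]) (by simp [hs i hi]) (by simp)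
            (Finset.Subset.refl _) (Finset.empty_subset _) hP
            (Finset.mem_union.mpr (Or.inl hw')) hvrej
          rw [Finset.union_empty, hXsing i hi] at h
          exact h hw'
        · by_contra hvrej
          have h := mlS_gen hfs hWmem (A := {x i}) (A' := ∅) (B := {z i}) (B' := {z i})
            (by simp [hb i hi]) (by simp) (by simp [hs i hi]) (by simp [hs i hi])
            (Finset.empty_subset _) (Finset.Subset.refl _) hQ
            (Finset.mem_union.mpr (Or.inl hw')) hvrej
          rw [Finset.union_empty, hZsing i hi] at h
          exact h hw'
      · rw [Finset.mem_singleton] at hx'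
        rw [hx']
        exact hjoint (Finset.mem_insert_self _ _)
    · rw [Finset.mem_singleton] at hv'
      rw [hv']
      exact hjoint (by simp)
  have hcross : ∀ i j, i < k → j < k → i ≠ j → C f (W ∪ {x i} ∪ {z j}) = W := by
    intro i j hi hj hij
    have hnR : ¬ ({x i, z j} : Finset X) ⊆ C f (W ∪ {x i} ∪ {z j}) := by
      intro hsub
      refine hgoal i hi j hj hij ⟨(hpair i hi).1, (hpair j hj).2.1, ?_⟩
      unfold Rational
      rw [hXfp i j hi hj, ← hWdef, hpairsplit]
      exact hsub
    by_cases hxz : x i = z j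
    · have heq : W ∪ {x i} ∪ {z j} = W ∪ {z j} := by
        rw [hxz, Finset.union_assoc, Finset.union_self]
      rw [heq, hZsing j hj]
    · have hor : x i ∉ C f (W ∪ {x i} ∪ {z j}) ∨ z j ∉ C f (W ∪ {x i} ∪ {z j}) := by
        by_contra h
        push_neg at h
        refine hnR (fun a ha => ?_)
        rcases Finset.mem_insert.mp ha with h' | h'
        · rw [h']; exact h.1
        · rw [Finset.mem_singleton.mp h']; exact h.2
      rcases hor with h | h
      · have h1 := hircR _ _ (by simp) h
        have h2 : (W ∪ {x i} ∪ {z j}).erase (x i) = W ∪ {z j} := by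
          rw [Finset.erase_union_distrib, Finset.erase_union_distrib,
            Finset.erase_eq_of_notMem (hxnw i hi), Finset.erase_singleton,
            Finset.erase_eq_of_notMem (fun hm => hxz (Finset.mem_singleton.mp hm)),
            Finset.union_empty]
        rw [h2] at h1
        rw [← h1, hZsing j hj]
      · have h1 := hircR _ _ (by simp) h
        have h2 : (W ∪ {x i} ∪ {z j}).erase (z j) = W ∪ {x i} := by
          rw [Finset.erase_union_distrib, Finset.erase_union_distrib,
            Finset.erase_eq_of_notMem (hznw j hj),
            Finset.erase_eq_of_notMem
              (fun hm => hxz (Finset.mem_singleton.mp hm).symm),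
            Finset.erase_singleton, Finset.union_empty]
        rw [h2] at h1
        rw [← h1, hXsing i hi]
  have hXfS : Xf b s f ((Finset.range k).image x ∪ (Finset.range k).image z)
      = (Finset.range k).image x ∪ (Finset.range k).image z := by
    apply Xf_eq_self'
    intro a ha
    rcases Finset.mem_union.mp ha with h | h
    · obtain ⟨m, hm, h'⟩ := Finset.mem_image.mp h
      subst h'; exact Or.inl (hb m (Finset.mem_range.mp hm))
    · obtain ⟨m, hm, h'⟩ := Finset.mem_image.mp h
      subst h'; exact Or.inr (hs m (Finset.mem_range.mp hm))
  have hrejS : ∃ c ∈ (Finset.range k).image x ∪ (Finset.range k).image z,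
      c ∉ C f (W ∪ (Finset.range k).image x ∪ (Finset.range k).image z) := by
    by_contra h
    push_neg at h
    apply hnot
    unfold Rational
    rw [hXfS, ← hWdef, ← Finset.union_assoc]
    exact fun c hc => h c hc
  obtain ⟨c, hcS, hcrej⟩ := hrejS
  rcases Finset.mem_union.mp hcS with hcX | hcZ
  · obtain ⟨i0, hi0, hxi0⟩ := Finset.mem_image.mp hcX
    rw [Finset.mem_range] at hi0
    subst hxi0
    exact shortcut_aux (C f) (fun a => b a = f) (fun a => s a = f) W (hC f) hircR hbase
      hWmem
      (fun A A' B B' hA hA' hB hB' h1 h2 c' hc' hcw hr =>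
        mlB_gen hfs hWmem hA hA' hB hB' h1 h2 hc' hcw hr)
      (fun A A' B B' hA hA' hB hB' h1 h2 c' hc' hcw hr =>
        mlS_gen hfs hWmem hA hA' hB hB' h1 h2 hc' hcw hr)
      k x z hb hs hxr hzr hpairF hcross i0 hi0 hcrej
  · obtain ⟨j0, hj0, hzj0⟩ := Finset.mem_image.mp hcZ
    rw [Finset.mem_range] at hj0
    subst hzj0
    exact shortcut_aux (C f) (fun a => s a = f) (fun a => b a = f) W (hC f) hircR hbase
      (fun v hv => (hWmem v hv).symm)
      (fun A A' B B' hA hA' hB hB' h1 h2 c' hc' hcw hr => by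
        have hr' : c' ∉ C f (W ∪ B ∪ A) := by rwa [Finset.union_right_comm]
        have h := mlS_gen hfs hWmem hB hB' hA hA' h2 h1 hc' hcw hr'
        rwa [Finset.union_right_comm] at h)
      (fun A A' B B' hA hA' hB hB' h1 h2 c' hc' hcw hr => by
        have hr' : c' ∉ C f (W ∪ B ∪ A) := by rwa [Finset.union_right_comm]
        have h := mlB_gen hfs hWmem hB hB' hA hA' h2 h1 hc' hcw hr'
        rwa [Finset.union_right_comm] at h)
      k z x hs hb hzr hxr
      (fun i hi => by rw [Finset.union_right_comm]; exact hpairF i hi)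
      (fun i j hi hj hij => by
        rw [Finset.union_right_comm]; exact hcross j i hj hi (Ne.symm hij))
      j0 hj0 (by rw [Finset.union_right_comm]; exact hcrej)
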